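/- Let A = (PZ)B(PZ)ᵀ be an ideal adjacency matrix where B is a minimal q×q role matrix, P is an n×n permutation matrix, and Z = Diag{z_1, …, z_q} ∈ ℝ^{n×q} is block diagonal with z_i the all-ones vector of length n_i ≥ 1. Let Ŝ_k = V_k V_kᵀ be a rank factorization with V_k ∈ ℝ^{q×r}, r = rank(Ŝ_k) ≤ q. Then S_k = (PZV_k)(PZV_k)ᵀ, and two rows of the n×r matrix ZV_k are parallel (each a nonzero scalar multiple of the other) if and only if the corresponding row indices lie in the same diagonal block of Z; hence the rows of PZV_k form exactly q clusters of mutually parallel nonzero vectors, one cluster per role. -/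

import Mathlib

/-! Because `(PZ)ᵀ(PZ) = N` is positive definite, induction on `k` gives
`S_k = (PZ)(B D Bᵀ + Bᵀ D B)(PZ)ᵀ` for a positive definite `D`, hence `Ŝ_k = B D Bᵀ + Bᵀ D B`.
If `uᵀV = 0` then `uᵀ Ŝ_k u = (Bᵀu)ᵀ D (Bᵀu) + (Bu)ᵀ D (Bu) = 0`, so `uᵀ[B Bᵀ] = 0`.
With `u = e_j - c e_i` this turns a relation `V_j = c V_i` between rows of `V` into the same
relation between rows of `[B Bᵀ]`, which minimality of `B` allows only for `i = j` and `c ≠ 0`.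
Finally, row `i` of `ZV` is row `i.1` of `V`. -/

open Matrix

namespace Matrix

variable {ι n : Type*} [Fintype n]

def roleSimilarity (B D : Matrix n n ℝ) : Matrix n n ℝ :=
  B * D * Bᵀ + Bᵀ * D * B

lemma roleSimilarity_posSemidef (B : Matrix n n ℝ) {D : Matrix n n ℝ} (hD : D.PosSemidef) :
    (roleSimilarity B D).PosSemidef := by
  have h₁ := hD.mul_mul_conjTranspose_same B
  have h₂ := hD.conjTranspose_mul_mul_same B
  rw [conjTranspose_eq_transpose_of_trivial] at h₁ h₂
  exact h₁.add h₂

lemma dotProduct_roleSimilarity_mulVec (B D : Matrix n n ℝ) (u : n → ℝ) :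
    u ⬝ᵥ (roleSimilarity B D *ᵥ u) =
      (u ᵥ* B) ⬝ᵥ (D *ᵥ (u ᵥ* B)) + (B *ᵥ u) ⬝ᵥ (D *ᵥ (B *ᵥ u)) := by
  simp only [roleSimilarity, add_mulVec, dotProduct_add, ← mulVec_mulVec, mulVec_transpose]
  congr 1
  · exact dotProduct_mulVec _ _ _
  · rw [dotProduct_comm, ← dotProduct_mulVec, dotProduct_comm]

lemma vecMul_fromCols_eq_zero_of_vecMul_eq_zero {B D : Matrix n n ℝ} {r : Type*} [Fintype r]
    {V : Matrix n r ℝ} (hD : D.PosDef) (hV : roleSimilarity B D = V * Vᵀ) {u : n → ℝ}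
    (hu : u ᵥ* V = 0) : u ᵥ* fromCols B Bᵀ = 0 := by
  have hzero : u ⬝ᵥ (roleSimilarity B D *ᵥ u) = 0 := by
    rw [hV, ← mulVec_mulVec, mulVec_transpose, hu, mulVec_zero, dotProduct_zero]
  have hdef : ∀ x, x ⬝ᵥ (D *ᵥ x) ≤ 0 → x = 0 := fun x hx =>
    by_contra fun h => (not_le.2 (by simpa using hD.dotProduct_mulVec_pos h)) hx
  have hnonneg : ∀ x, 0 ≤ x ⬝ᵥ (D *ᵥ x) := fun x => by
    simpa using hD.posSemidef.dotProduct_mulVec_nonneg x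
  rw [dotProduct_roleSimilarity_mulVec] at hzero
  have h₁ := hdef (u ᵥ* B) (by linarith [hnonneg (B *ᵥ u)])
  have h₂ := hdef (B *ᵥ u) (by linarith [hnonneg (u ᵥ* B)])
  rw [vecMul_fromCols, vecMul_transpose, h₁, h₂]
  exact Sum.elim_zero_zero

lemma row_eq_smul_of_vecMul_eq_zero {R m r s : Type*} [CommRing R] [Fintype m] [DecidableEq m]
    {V : Matrix m r R} {X : Matrix m s R} (hker : ∀ u, u ᵥ* V = 0 → u ᵥ* X = 0)
    {i j : m} {c : R} (hij : V j = c • V i) : X j = c • X i := by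
  have hu := hker (Pi.single j 1 - c • Pi.single i 1) (by
    rw [sub_vecMul, smul_vecMul, single_one_vecMul, single_one_vecMul]
    exact sub_eq_zero.2 hij)
  rw [sub_vecMul, smul_vecMul, single_one_vecMul, single_one_vecMul] at hu
  exact sub_eq_zero.1 hu

lemma mul_mul_transpose_add_transpose_mul_mul [Fintype ι] {A : Matrix ι ι ℝ}
    {Q : Matrix ι n ℝ} {B : Matrix n n ℝ} (hA : A = Q * B * Qᵀ) (Y : Matrix ι ι ℝ) :
    A * Y * Aᵀ + Aᵀ * Y * A = Q * roleSimilarity B (Qᵀ * Y * Q) * Qᵀ := by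
  simp only [hA, roleSimilarity, transpose_mul, transpose_transpose, Matrix.mul_add,
    Matrix.add_mul, Matrix.mul_assoc]

lemma inv_mul_transpose_mul_mul_mul_inv [Fintype ι] {Q : Matrix ι n ℝ} [DecidableEq n]
    (hQ : IsUnit (Qᵀ * Q).det) (M : Matrix n n ℝ) :
    (Qᵀ * Q)⁻¹ * Qᵀ * (Q * M * Qᵀ) * Q * (Qᵀ * Q)⁻¹ = M := by
  calc (Qᵀ * Q)⁻¹ * Qᵀ * (Q * M * Qᵀ) * Q * (Qᵀ * Q)⁻¹
      = ((Qᵀ * Q)⁻¹ * (Qᵀ * Q)) * M * ((Qᵀ * Q) * (Qᵀ * Q)⁻¹) := by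
        simp only [Matrix.mul_assoc]
    _ = M := by rw [nonsing_inv_mul _ hQ, mul_nonsing_inv _ hQ, Matrix.one_mul, Matrix.mul_one]

lemma exists_posDef_eq_mul_roleSimilarity_mul [Fintype ι] [DecidableEq ι] {Q : Matrix ι n ℝ}
    (hQ : Function.Injective Q.mulVec) {A : Matrix ι ι ℝ} {B : Matrix n n ℝ}
    (hA : A = Q * B * Qᵀ) {β : ℝ} {S : ℕ → Matrix ι ι ℝ} (hS1 : S 1 = A * Aᵀ + Aᵀ * A)
    (hSk : ∀ k, 1 ≤ k →
      S (k + 1) = A * (1 + β ^ 2 • S k) * Aᵀ + Aᵀ * (1 + β ^ 2 • S k) * A)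
    {k : ℕ} (hk : 1 ≤ k) :
    ∃ D : Matrix n n ℝ, D.PosDef ∧ S k = Q * roleSimilarity B D * Qᵀ := by
  have hconj : ∀ Y : Matrix ι ι ℝ, Y.PosDef → (Qᵀ * Y * Q).PosDef := fun Y hY => by
    simpa only [conjTranspose_eq_transpose_of_trivial] using hY.conjTranspose_mul_mul_same hQ
  induction k, hk using Nat.le_induction with
  | base =>
    refine ⟨Qᵀ * 1 * Q, hconj 1 PosDef.one, ?_⟩
    rw [hS1, ← mul_mul_transpose_add_transpose_mul_mul hA, Matrix.mul_one, Matrix.mul_one]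
  | succ k hk ih =>
    obtain ⟨D, hD, hSD⟩ := ih
    have hS : (S k).PosSemidef := by
      simpa only [hSD, conjTranspose_eq_transpose_of_trivial] using
        (roleSimilarity_posSemidef B hD.posSemidef).mul_mul_conjTranspose_same Q
    refine ⟨_, hconj _ (PosDef.one.add_posSemidef (hS.smul (sq_nonneg β))), ?_⟩
    rw [hSk k hk, mul_mul_transpose_add_transpose_mul_mul hA]

lemma transpose_permMatrix_mul_self {R m : Type*} [NonAssocSemiring R] [DecidableEq m]
    [Fintype m] (σ : Equiv.Perm m) : (σ.permMatrix R)ᵀ * σ.permMatrix R = 1 := by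
  rw [transpose_permMatrix, ← permMatrix_mul, mul_inv_cancel, permMatrix_one]

lemma permMatrix_mulVec_injective {R m : Type*} [CommRing R] [DecidableEq m] [Fintype m]
    (σ : Equiv.Perm m) : Function.Injective (σ.permMatrix R).mulVec := by
  have hσ : (σ.permMatrix R).mulVec = fun v => v ∘ σ := funext fun _ => permMatrix_mulVec σ
  exact hσ ▸ σ.surjective.injective_comp_right

section

variable {R r : Type*} [NonAssocSemiring R] [DecidableEq n] {f : ι → n} {Z : Matrix ι n R}

lemma mul_apply_eq_of_eq_ite (hZ : ∀ i j, Z i j = if f i = j then 1 else 0)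
    (V : Matrix n r R) (i : ι) : (Z * V) i = V (f i) := by
  ext j
  simp [mul_apply, hZ]

lemma mulVec_injective_of_eq_ite (hZ : ∀ i j, Z i j = if f i = j then 1 else 0)
    (hf : Function.Surjective f) : Function.Injective Z.mulVec := by
  have hZf : Z.mulVec = fun x => x ∘ f := funext fun x => by
    ext i
    simp [mulVec, dotProduct, hZ]
  exact hZf ▸ hf.injective_comp_right

end

end Matrix

theorem ideal_lowRankFactor_clusters_general (q : ℕ) (m : Fin q → ℕ) (hm : ∀ i, 1 ≤ m i)
    (P : Matrix ((i : Fin q) × Fin (m i)) ((i : Fin q) × Fin (m i)) ℝ)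
    (hP : ∃ σ : Equiv.Perm ((i : Fin q) × Fin (m i)), P = σ.permMatrix ℝ)
    (Z : Matrix ((i : Fin q) × Fin (m i)) (Fin q) ℝ)
    (hZ : ∀ i j, Z i j = if i.1 = j then 1 else 0)
    (B : Matrix (Fin q) (Fin q) ℝ)
    (hBrow : ∀ i, (Matrix.fromCols B Bᵀ) i ≠ 0)
    (hBmin : ∀ i j, i ≠ j → ∀ c d : ℝ,
      c • (Matrix.fromCols B Bᵀ) i + d • (Matrix.fromCols B Bᵀ) j = 0 →
        c = 0 ∧ d = 0)
    (A : Matrix ((i : Fin q) × Fin (m i)) ((i : Fin q) × Fin (m i)) ℝ)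
    (hA : A = (P * Z) * B * (P * Z)ᵀ)
    (β : ℝ)
    (S : ℕ → Matrix ((i : Fin q) × Fin (m i)) ((i : Fin q) × Fin (m i)) ℝ)
    (hS1 : S 1 = A * Aᵀ + Aᵀ * A)
    (hSk : ∀ k, 1 ≤ k →
      S (k + 1) = A * (1 + β ^ 2 • S k) * Aᵀ + Aᵀ * (1 + β ^ 2 • S k) * A)
    (N : Matrix (Fin q) (Fin q) ℝ) (hN : N = Zᵀ * Z)
    (Shat : ℕ → Matrix (Fin q) (Fin q) ℝ)
    (hShat : ∀ k, Shat k = N⁻¹ * (P * Z)ᵀ * S k * (P * Z) * N⁻¹)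
    (k : ℕ) (hk : 1 ≤ k)
    (r : ℕ) (V : Matrix (Fin q) (Fin r) ℝ)
    (hV : Shat k = V * Vᵀ) :
    S k = (P * Z * V) * (P * Z * V)ᵀ ∧
    (∀ i, (Z * V) i ≠ 0) ∧
    ∀ i i' : (i : Fin q) × Fin (m i),
      (∃ c : ℝ, c ≠ 0 ∧ (Z * V) i' = c • (Z * V) i) ↔ i.1 = i'.1 := by
  obtain ⟨σ, rfl⟩ := hP
  have hZV := mul_apply_eq_of_eq_ite hZ V
  set Q := σ.permMatrix ℝ * Z
  have hQ : Function.Injective Q.mulVec := by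
    have hZinj := mulVec_injective_of_eq_ite hZ fun i => ⟨⟨i, ⟨0, hm i⟩⟩, rfl⟩
    simpa only [Function.comp_def, mulVec_mulVec] using
      (permMatrix_mulVec_injective σ).comp hZinj
  have hQQ : Qᵀ * Q = N := by
    rw [hN, transpose_mul, Matrix.mul_assoc, ← Matrix.mul_assoc _ _ Z,
      transpose_permMatrix_mul_self, Matrix.one_mul]
  have hQunit : IsUnit (Qᵀ * Q).det := (PosDef.conjTranspose_mul_self Q hQ).det_pos.ne'.isUnit
  obtain ⟨D, hD, hSD⟩ := exists_posDef_eq_mul_roleSimilarity_mul hQ hA hS1 hSk hk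
  have hShatD : Shat k = roleSimilarity B D := by
    rw [hShat, hSD, ← hQQ]
    exact inv_mul_transpose_mul_mul_mul_inv hQunit _
  have hker : ∀ u, u ᵥ* V = 0 → u ᵥ* fromCols B Bᵀ = 0 := fun u =>
    vecMul_fromCols_eq_zero_of_vecMul_eq_zero hD (hShatD.symm.trans hV)
  refine ⟨?_, fun i hi => hBrow i.1 ?_, fun i i' => ⟨?_, fun h => ⟨1, one_ne_zero, ?_⟩⟩⟩
  · rw [hSD, ← hShatD, hV]
    simp only [transpose_mul, Matrix.mul_assoc]
  · rw [hZV] at hi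
    simpa using row_eq_smul_of_vecMul_eq_zero hker (c := 0) (i := i.1) (j := i.1) (by simp [hi])
  · rintro ⟨c, hc, hcV⟩
    by_contra hne
    rw [hZV, hZV] at hcV
    have hcX := row_eq_smul_of_vecMul_eq_zero hker hcV
    exact hc (hBmin _ _ hne c (-1) (by rw [hcX, neg_one_smul, add_neg_cancel])).1
  · rw [hZV, hZV, h, one_smul]

/-- Let `A = (PZ)B(PZ)ᵀ` be an ideal adjacency matrix with `B` a minimal
role matrix (no row of `[B Bᵀ]` is zero and no two distinct rows of `[B Bᵀ]` are
linearly dependent), where nodes are indexed by the sigma type `Σ i : Fin q, Fin (m i)`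
(block `i` has size `m i ≥ 1`). If `Ŝ_k = V Vᵀ` is a rank factorization of the
compressed similarity matrix `Ŝ_k := N⁻¹(PZ)ᵀ S_k (PZ) N⁻¹` (`N := ZᵀZ`), then
`S_k = (PZV)(PZV)ᵀ`, every row of `ZV` is nonzero, and two rows of `ZV` are parallel
(one a nonzero multiple of the other) iff they belong to the same diagonal block of
`Z`; hence the rows of `PZV` form exactly `q` clusters of mutually parallel nonzero
vectors, one per role. -/
theorem ideal_lowRankFactor_clusters (q : ℕ) (m : Fin q → ℕ) (hm : ∀ i, 1 ≤ m i)
    (P : Matrix ((i : Fin q) × Fin (m i)) ((i : Fin q) × Fin (m i)) ℝ)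
    (hP : ∃ σ : Equiv.Perm ((i : Fin q) × Fin (m i)), P = σ.permMatrix ℝ)
    (Z : Matrix ((i : Fin q) × Fin (m i)) (Fin q) ℝ)
    (hZ : ∀ i j, Z i j = if i.1 = j then 1 else 0)
    (B : Matrix (Fin q) (Fin q) ℝ)
    (hBrow : ∀ i, (Matrix.fromCols B Bᵀ) i ≠ 0)
    (hBmin : ∀ i j, i ≠ j → ∀ c d : ℝ,
      c • (Matrix.fromCols B Bᵀ) i + d • (Matrix.fromCols B Bᵀ) j = 0 →
        c = 0 ∧ d = 0)
    (A : Matrix ((i : Fin q) × Fin (m i)) ((i : Fin q) × Fin (m i)) ℝ)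
    (hA : A = (P * Z) * B * (P * Z)ᵀ)
    (β : ℝ)
    (S : ℕ → Matrix ((i : Fin q) × Fin (m i)) ((i : Fin q) × Fin (m i)) ℝ)
    (hS1 : S 1 = A * Aᵀ + Aᵀ * A)
    (hSk : ∀ k, 1 ≤ k →
      S (k + 1) = A * (1 + β ^ 2 • S k) * Aᵀ + Aᵀ * (1 + β ^ 2 • S k) * A)
    (N : Matrix (Fin q) (Fin q) ℝ) (hN : N = Zᵀ * Z)
    (Shat : ℕ → Matrix (Fin q) (Fin q) ℝ)
    (hShat : ∀ k, Shat k = N⁻¹ * (P * Z)ᵀ * S k * (P * Z) * N⁻¹)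
    (k : ℕ) (hk : 1 ≤ k)
    (r : ℕ) (V : Matrix (Fin q) (Fin r) ℝ)
    (hV : Shat k = V * Vᵀ) (hr : r = (Shat k).rank) :
    S k = (P * Z * V) * (P * Z * V)ᵀ ∧
    (∀ i, (Z * V) i ≠ 0) ∧
    ∀ i i' : (i : Fin q) × Fin (m i),
      (∃ c : ℝ, c ≠ 0 ∧ (Z * V) i' = c • (Z * V) i) ↔ i.1 = i'.1 :=
  ideal_lowRankFactor_clusters_general q m hm P hP Z hZ B hBrow hBmin A hA β S hS1 hSk N hN Shat
    hShat k hk r V hV
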